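/- arXiv:2410.03666 — 6 statements merged into one kernel-verified Lean document; each statement's English description precedes it below -/
import Mathlib

section
/- Let w > 0 and let α, β, γ ∈ (0, π/2) with β ≤ α. If cos(α+β)/sin(β) = cos(2γ)/sin(γ), then β ≤ γ ≤ α, with β = γ if and only if α = β = γ. -/
/-!
Write `f t = cos (2t) / sin t = 1 / sin t - 2 sin t`, strictly decreasing on `(0, π/2]`.
For `β ≤ α` the quotient `cos (α + β) / sin β` is squeezed between `f α` and `f β`:
the upper bound because cosine decreases on `[0, π]`, the lower one by the identity
`cos (α + β) sin α - cos (2α) sin β = cos α sin (α - β)`. Monotonicity of `f` then places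
`γ` between `β` and `α`, and `γ = β` forces `cos (α + β) = cos (2β)`, i.e. `α = β`.
-/

open Real Set

lemma strictAntiOn_cos_two_mul_div_sin :
    StrictAntiOn (fun t => cos (2 * t) / sin t) (Ioc 0 (π / 2)) := by
  intro s hs t ht hst
  have hsin_s : 0 < sin s := sin_pos_of_pos_of_lt_pi hs.1 (by linarith [pi_pos, hs.2])
  have hsin_t : 0 < sin t := sin_pos_of_pos_of_lt_pi ht.1 (by linarith [pi_pos, ht.2])
  have hsin_lt : sin s < sin t :=
    strictMonoOn_sin ⟨by linarith [hs.1, pi_pos], hs.2⟩ ⟨by linarith [ht.1, pi_pos], ht.2⟩ hst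
  simp only [cos_two_mul, cos_sq']
  rw [div_lt_div_iff₀ hsin_t hsin_s]
  nlinarith [mul_pos hsin_s hsin_t]

lemma cos_add_le_cos_two_mul {α β : ℝ} (hβ : 0 ≤ β) (hβα : β ≤ α) (hαβ : α + β ≤ π) :
    cos (α + β) ≤ cos (2 * β) :=
  cos_le_cos_of_nonneg_of_le_pi (by linarith) hαβ (by linarith)

lemma cos_add_mul_sin_sub_cos_two_mul_mul_sin (α β : ℝ) :
    cos (α + β) * sin α - cos (2 * α) * sin β = cos α * sin (α - β) := by
  rw [cos_add, sin_sub, cos_two_mul']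
  ring

lemma cos_two_mul_div_sin_le_cos_add_div_sin {α β : ℝ} (hα : α ∈ Ioo 0 (π / 2))
    (hβ : 0 < β) (hβα : β ≤ α) :
    cos (2 * α) / sin α ≤ cos (α + β) / sin β := by
  have hsin_α : 0 < sin α := sin_pos_of_pos_of_lt_pi hα.1 (by linarith [pi_pos, hα.2])
  have hsin_β : 0 < sin β := sin_pos_of_pos_of_lt_pi hβ (by linarith [pi_pos, hα.2])
  have hcos_α : 0 ≤ cos α := (cos_pos_of_mem_Ioo ⟨by linarith [hα.1, pi_pos], hα.2⟩).le
  have hsin_sub : 0 ≤ sin (α - β) :=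
    sin_nonneg_of_nonneg_of_le_pi (by linarith) (by linarith [hα.2, pi_pos])
  rw [div_le_div_iff₀ hsin_α hsin_β]
  nlinarith [cos_add_mul_sin_sub_cos_two_mul_mul_sin α β, mul_nonneg hcos_α hsin_sub]

theorem stmt_3_general (α β γ : ℝ)
    (hα : α ∈ Set.Ioo 0 (Real.pi / 2)) (hβ : β ∈ Set.Ioo 0 (Real.pi / 2))
    (hγ : γ ∈ Set.Ioo 0 (Real.pi / 2)) (hβα : β ≤ α)
    (h : Real.cos (α + β) / Real.sin β = Real.cos (2 * γ) / Real.sin γ) :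
    β ≤ γ ∧ γ ≤ α ∧ (β = γ ↔ α = β ∧ β = γ) := by
  have hf := strictAntiOn_cos_two_mul_div_sin
  have hsin_β : 0 < sin β := sin_pos_of_pos_of_lt_pi hβ.1 (by linarith [pi_pos, hβ.2])
  have hβγ : β ≤ γ := by
    refine (hf.le_iff_ge (Ioo_subset_Ioc_self hγ) (Ioo_subset_Ioc_self hβ)).mp ?_
    rw [← h]
    exact div_le_div_of_nonneg_right
      (cos_add_le_cos_two_mul hβ.1.le hβα (by linarith [hα.2, hβ.2])) hsin_β.le
  have hγα : γ ≤ α := by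
    refine (hf.le_iff_ge (Ioo_subset_Ioc_self hα) (Ioo_subset_Ioc_self hγ)).mp ?_
    rw [← h]
    exact cos_two_mul_div_sin_le_cos_add_div_sin hα hβ.1 hβα
  refine ⟨hβγ, hγα, fun hβγ_eq => ⟨?_, hβγ_eq⟩, And.right⟩
  subst hβγ_eq
  have hcos : cos (α + β) = cos (2 * β) := (div_left_inj' hsin_β.ne').mp h
  have := injOn_cos ⟨by linarith [hα.1, hβ.1], by linarith [hα.2, hβ.2]⟩
    ⟨by linarith [hβ.1], by linarith [hβ.2]⟩ hcos
  linarith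

theorem stmt_3 (w α β γ : ℝ) (hw : 0 < w)
    (hα : α ∈ Set.Ioo 0 (Real.pi / 2)) (hβ : β ∈ Set.Ioo 0 (Real.pi / 2))
    (hγ : γ ∈ Set.Ioo 0 (Real.pi / 2)) (hβα : β ≤ α)
    (h : Real.cos (α + β) / Real.sin β = Real.cos (2 * γ) / Real.sin γ) :
    β ≤ γ ∧ γ ≤ α ∧ (β = γ ↔ α = β ∧ β = γ) :=
  stmt_3_general α β γ hα hβ hγ hβα h
end

section
/- For every w > 0, we have w < 2·arcosh((cosh(w) + √(cosh²w + 8))/4) < 2w. -/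
/-!
With `c = cosh w`, the number `y = (c + √(c² + 8)) / 4` is the larger root of `2x² - cx - 1`,
so for `x ≥ 0` the sign of `2x² - cx - 1` decides how `x` compares with `y`. At `x = c` it is
`c² - 1 > 0`; at `x = d = cosh (w / 2)`, where `c = 2d² - 1`, it is `-(d - 1)(2d² - 1) < 0`.
Hence `cosh (w / 2) < y < cosh w`, and the increasing function `arcosh` gives
`w / 2 < arcosh y < w`.
-/

noncomputable def arcosh (x : ℝ) : ℝ := Real.log (x + Real.sqrt (x ^ 2 - 1))

theorem arcosh_eq_real_arcosh : arcosh = Real.arcosh := rfl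

section

open Real

noncomputable def quadPosRoot (c : ℝ) : ℝ := (c + √(c ^ 2 + 8)) / 4

theorem quadPosRoot_factor (c x : ℝ) :
    2 * x ^ 2 - c * x - 1 = 2 * (x - quadPosRoot c) * (x - (c - √(c ^ 2 + 8)) / 4) := by
  have hs : √(c ^ 2 + 8) ^ 2 = c ^ 2 + 8 := sq_sqrt (by positivity)
  unfold quadPosRoot
  linear_combination hs / 8

theorem sub_quadNegRoot_pos (c : ℝ) {x : ℝ} (hx : 0 ≤ x) :
    0 < x - (c - √(c ^ 2 + 8)) / 4 := by
  have : c < √(c ^ 2 + 8) := lt_sqrt_of_sq_lt (by linarith)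
  linarith

theorem lt_quadPosRoot_iff (c : ℝ) {x : ℝ} (hx : 0 ≤ x) :
    x < quadPosRoot c ↔ 2 * x ^ 2 - c * x - 1 < 0 := by
  have h := sub_quadNegRoot_pos c hx
  rw [← sub_pos, ← mul_pos_iff_of_pos_right (mul_pos two_pos h), ← neg_pos,
    quadPosRoot_factor]
  ring_nf

theorem quadPosRoot_lt_iff (c : ℝ) {x : ℝ} (hx : 0 ≤ x) :
    quadPosRoot c < x ↔ 0 < 2 * x ^ 2 - c * x - 1 := by
  have h := sub_quadNegRoot_pos c hx
  rw [quadPosRoot_factor, mul_assoc, mul_pos_iff_of_pos_left two_pos,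
    mul_pos_iff_of_pos_right h, sub_pos]

theorem cosh_half_lt_quadPosRoot_cosh {w : ℝ} (hw : w ≠ 0) :
    cosh (w / 2) < quadPosRoot (cosh w) := by
  have hd : 1 < cosh (w / 2) := one_lt_cosh.2 (by simpa using hw)
  have hc : cosh w = 2 * cosh (w / 2) ^ 2 - 1 := by
    have h := cosh_two_mul (w / 2)
    rw [mul_div_cancel₀ w two_ne_zero] at h
    linarith [cosh_sq (w / 2)]
  rw [lt_quadPosRoot_iff _ (by positivity), hc]
  nlinarith [mul_pos (sub_pos.2 hd) (by nlinarith : (0 : ℝ) < 2 * cosh (w / 2) ^ 2 - 1)]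

theorem quadPosRoot_cosh_lt_cosh {w : ℝ} (hw : w ≠ 0) : quadPosRoot (cosh w) < cosh w := by
  have hc : 1 < cosh w := one_lt_cosh.2 hw
  rw [quadPosRoot_lt_iff _ (by positivity)]
  nlinarith

end

theorem stmt_5 (w : ℝ) (hw : 0 < w) :
    w < 2 * arcosh ((Real.cosh w + Real.sqrt (Real.cosh w ^ 2 + 8)) / 4) ∧
    2 * arcosh ((Real.cosh w + Real.sqrt (Real.cosh w ^ 2 + 8)) / 4) < 2 * w := by
  change w < 2 * arcosh (quadPosRoot (Real.cosh w)) ∧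
    2 * arcosh (quadPosRoot (Real.cosh w)) < 2 * w
  have hlow := cosh_half_lt_quadPosRoot_cosh hw.ne'
  have hup := quadPosRoot_cosh_lt_cosh hw.ne'
  have hroot_pos : 0 < quadPosRoot (Real.cosh w) := (Real.cosh_pos _).trans hlow
  rw [← Real.arcosh_lt_arcosh (Real.cosh_pos _) hroot_pos, Real.arcosh_cosh (by positivity)]
    at hlow
  rw [← Real.arcosh_lt_arcosh hroot_pos (Real.cosh_pos _), Real.arcosh_cosh hw.le] at hup
  rw [arcosh_eq_real_arcosh]
  constructor <;> linarith
end

section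
/- Let w > 0 and let γ ∈ (0, π/2) satisfy sin(γ) = (−cosh(w) + √(cosh²w + 8))/4. Then arcosh(cosh(w)·√(1 + sinh²(w)/(4cos²γ))) = 2·arcosh(1/(2·sin γ)). -/
lemma arcosh_two_mul_sq_sub_one {y : ℝ} (hy : 1 ≤ y) :
    arcosh (2 * y ^ 2 - 1) = 2 * arcosh y := by
  have hsq : Real.sqrt (y ^ 2 - 1) ^ 2 = y ^ 2 - 1 := Real.sq_sqrt (by nlinarith)
  have hroot : Real.sqrt ((2 * y ^ 2 - 1) ^ 2 - 1) = 2 * y * Real.sqrt (y ^ 2 - 1) := by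
    rw [show (2 * y ^ 2 - 1) ^ 2 - 1 = (2 * y) ^ 2 * (y ^ 2 - 1) by ring,
      Real.sqrt_mul (by positivity), Real.sqrt_sq (by positivity)]
  unfold arcosh
  rw [hroot, show 2 * y ^ 2 - 1 + 2 * y * Real.sqrt (y ^ 2 - 1)
      = (y + Real.sqrt (y ^ 2 - 1)) ^ 2 by linear_combination -hsq, Real.log_pow]
  push_cast
  ring

section Root

variable {c s : ℝ}

lemma pos_of_eq_quadratic_root (h : s = (-c + Real.sqrt (c ^ 2 + 8)) / 4) : 0 < s := by
  have : |c| < Real.sqrt (c ^ 2 + 8) := by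
    rw [← Real.sqrt_sq_eq_abs]
    exact Real.sqrt_lt_sqrt (sq_nonneg c) (by linarith)
  rw [h]
  linarith [le_abs_self c]

lemma two_mul_sq_add_mul_eq_one_of_eq_quadratic_root
    (h : s = (-c + Real.sqrt (c ^ 2 + 8)) / 4) : 2 * s ^ 2 + c * s = 1 := by
  have hroot : Real.sqrt (c ^ 2 + 8) = 4 * s + c := by rw [h]; ring
  have hsq : (4 * s + c) ^ 2 = c ^ 2 + 8 := by
    rw [← hroot, Real.sq_sqrt (by positivity)]
  linear_combination hsq / 8

lemma le_half_of_two_mul_sq_add_mul_eq_one (hc : 1 ≤ c) (hs : 0 < s)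
    (hrel : 2 * s ^ 2 + c * s = 1) : s ≤ 1 / 2 := by
  nlinarith

lemma one_add_div_eq_inv_two_mul_sq (hs : 0 < s) (hs' : s ≤ 1 / 2)
    (hrel : 2 * s ^ 2 + c * s = 1) :
    1 + (c ^ 2 - 1) / (4 * (1 - s ^ 2)) = (1 / (2 * s)) ^ 2 := by
  have hc : c = (1 - 2 * s ^ 2) / s := by field_simp; linarith
  have hs1 : 1 - s ^ 2 ≠ 0 := by nlinarith
  rw [hc]
  field_simp
  ring

end Root

theorem stmt_8_general (w γ : ℝ)
    (h : Real.sin γ = (-Real.cosh w + Real.sqrt (Real.cosh w ^ 2 + 8)) / 4) :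
    arcosh (Real.cosh w * Real.sqrt (1 + Real.sinh w ^ 2 / (4 * Real.cos γ ^ 2))) =
      2 * arcosh (1 / (2 * Real.sin γ)) := by
  set c := Real.cosh w
  set s := Real.sin γ
  have hs : 0 < s := pos_of_eq_quadratic_root h
  have hrel : 2 * s ^ 2 + c * s = 1 := two_mul_sq_add_mul_eq_one_of_eq_quadratic_root h
  have hs' : s ≤ 1 / 2 := le_half_of_two_mul_sq_add_mul_eq_one (Real.one_le_cosh w) hs hrel
  have hy : 1 ≤ 1 / (2 * s) := by rw [le_div_iff₀ (by positivity)]; linarith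
  have harg : c * (1 / (2 * s)) = 2 * (1 / (2 * s)) ^ 2 - 1 := by
    field_simp
    linear_combination hrel
  rw [Real.sinh_sq, Real.cos_sq', one_add_div_eq_inv_two_mul_sq hs hs' hrel,
    Real.sqrt_sq (by positivity), harg, arcosh_two_mul_sq_sub_one hy]

theorem stmt_8 (w γ : ℝ) (hw : 0 < w) (hγ : γ ∈ Set.Ioo 0 (Real.pi / 2))
    (h : Real.sin γ = (-Real.cosh w + Real.sqrt (Real.cosh w ^ 2 + 8)) / 4) :
    arcosh (Real.cosh w * Real.sqrt (1 + Real.sinh w ^ 2 / (4 * Real.cos γ ^ 2))) =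
      2 * arcosh (1 / (2 * Real.sin γ)) :=
  stmt_8_general w γ h
end

section
/- For every w > 0, √(((cosh(w) + √(cosh²w + 8))/4)² − 1) < (√3/2)·sinh(w). -/
open Real

lemma mul_sqrt_sq_add_eight_lt {c : ℝ} (hc : 1 < c) : c * √(c ^ 2 + 8) < 5 * c ^ 2 - 2 := by
  have hc0 : 0 ≤ c := by linarith
  have hsqrt : c * √(c ^ 2 + 8) = √(c ^ 2 * (c ^ 2 + 8)) := by
    rw [sqrt_mul (sq_nonneg c), sqrt_sq hc0]
  rw [hsqrt, sqrt_lt' (by nlinarith)]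
  have hfactor : 0 < (6 * c ^ 2 - 1) * (c ^ 2 - 1) := by
    apply mul_pos <;> nlinarith
  nlinarith

lemma sq_add_sqrt_div_four_sub_one_lt {c : ℝ} (hc : 1 < c) :
    ((c + √(c ^ 2 + 8)) / 4) ^ 2 - 1 < 3 / 4 * (c ^ 2 - 1) := by
  have ht : √(c ^ 2 + 8) ^ 2 = c ^ 2 + 8 := sq_sqrt (by positivity)
  nlinarith [mul_sqrt_sq_add_eight_lt hc]

theorem stmt_9 (w : ℝ) (hw : 0 < w) :
    Real.sqrt (((Real.cosh w + Real.sqrt (Real.cosh w ^ 2 + 8)) / 4) ^ 2 - 1) <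
      Real.sqrt 3 / 2 * Real.sinh w := by
  have hsinh : 0 < sinh w := sinh_pos_iff.mpr hw
  have hcosh : 1 < cosh w := one_lt_cosh.mpr hw.ne'
  rw [sqrt_lt' (by positivity)]
  calc ((cosh w + √(cosh w ^ 2 + 8)) / 4) ^ 2 - 1
      < 3 / 4 * (cosh w ^ 2 - 1) := sq_add_sqrt_div_four_sub_one_lt hcosh
    _ = (√3 / 2 * sinh w) ^ 2 := by
      rw [mul_pow, div_pow, sq_sqrt (by norm_num : (0 : ℝ) ≤ 3), cosh_sq]
      ring
end

section
/- For every w > 0, w/2 < arsinh((2/√3)·√(((cosh(w) + √(cosh²w + 8))/4)² − 1)) < w. -/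
/-!
Put `c = cosh w` and let `t = (c + √(c² + 8)) / 4`, the positive root of `2t² - ct - 1`, so that
`c = 2t - 1/t` and `t > 1`. The argument `x` of `arsinh` satisfies `x² = 4(t² - 1)/3`, while
`sinh² (w/2) = (c - 1)/2` and `sinh² w = c² - 1`. After eliminating `c`, the two comparisons
become `(t - 1)(2t - 1)(4t + 3) > 0` and `(t² - 1)(8t² - 3) > 0`.
-/

open Real

noncomputable def quadRoot (c : ℝ) : ℝ := (c + √(c ^ 2 + 8)) / 4

lemma two_mul_quadRoot_sq (c : ℝ) : 2 * quadRoot c ^ 2 = c * quadRoot c + 1 := by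
  have hs : √(c ^ 2 + 8) ^ 2 = c ^ 2 + 8 := sq_sqrt (by positivity)
  unfold quadRoot
  linear_combination hs / 8

lemma one_lt_quadRoot {c : ℝ} (hc : 1 < c) : 1 < quadRoot c := by
  have hs : 3 < √(c ^ 2 + 8) := by
    rw [show (3 : ℝ) = √(3 ^ 2) from (sqrt_sq (by norm_num)).symm]
    exact sqrt_lt_sqrt (by norm_num) (by nlinarith)
  unfold quadRoot
  linarith

section QuadRootBounds

variable {c t : ℝ}

lemma sub_one_div_two_lt_of_two_mul_sq (ht : 1 < t) (hct : 2 * t ^ 2 = c * t + 1) :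
    (c - 1) / 2 < 4 / 3 * (t ^ 2 - 1) := by
  have hdiff : t * (8 * (t ^ 2 - 1)) - t * (3 * (c - 1)) =
      (t - 1) * ((2 * t - 1) * (4 * t + 3)) := by
    linear_combination 3 * hct
  have hpos : 0 < (t - 1) * ((2 * t - 1) * (4 * t + 3)) :=
    mul_pos (by linarith) (mul_pos (by linarith) (by linarith))
  have : 3 * (c - 1) < 8 * (t ^ 2 - 1) :=
    lt_of_mul_lt_mul_left (by linarith) (by linarith : 0 ≤ t)
  linarith

lemma lt_sq_sub_one_of_two_mul_sq (ht : 1 < t) (hct : 2 * t ^ 2 = c * t + 1) :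
    4 / 3 * (t ^ 2 - 1) < c ^ 2 - 1 := by
  have hdiff : t ^ 2 * (3 * (c ^ 2 - 1)) - t ^ 2 * (4 * (t ^ 2 - 1)) =
      (t ^ 2 - 1) * (8 * t ^ 2 - 3) := by
    linear_combination (-3 * (c * t + 2 * t ^ 2 - 1)) * hct
  have hpos : 0 < (t ^ 2 - 1) * (8 * t ^ 2 - 3) := mul_pos (by nlinarith) (by nlinarith)
  have : 4 * (t ^ 2 - 1) < 3 * (c ^ 2 - 1) :=
    lt_of_mul_lt_mul_left (by linarith) (by positivity : 0 ≤ t ^ 2)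
  linarith

end QuadRootBounds

lemma sinh_half_sq (x : ℝ) : sinh (x / 2) ^ 2 = (cosh x - 1) / 2 := by
  have h := cosh_two_mul (x / 2)
  rw [mul_div_cancel₀ x two_ne_zero, cosh_sq] at h
  linarith

lemma lt_arsinh_iff {x y : ℝ} : y < arsinh x ↔ sinh y < x := by
  rw [← sinh_lt_sinh, sinh_arsinh]

lemma arsinh_lt_iff {x y : ℝ} : arsinh x < y ↔ x < sinh y := by
  rw [← sinh_lt_sinh, sinh_arsinh]

theorem stmt_10 (w : ℝ) (hw : 0 < w) :
    w / 2 < Real.arsinh (2 / Real.sqrt 3 *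
        Real.sqrt (((Real.cosh w + Real.sqrt (Real.cosh w ^ 2 + 8)) / 4) ^ 2 - 1)) ∧
    Real.arsinh (2 / Real.sqrt 3 *
        Real.sqrt (((Real.cosh w + Real.sqrt (Real.cosh w ^ 2 + 8)) / 4) ^ 2 - 1)) < w := by
  change w / 2 < arsinh (2 / √3 * √(quadRoot (cosh w) ^ 2 - 1)) ∧
    arsinh (2 / √3 * √(quadRoot (cosh w) ^ 2 - 1)) < w
  set t := quadRoot (cosh w)
  have ht : 1 < t := one_lt_quadRoot (one_lt_cosh.mpr hw.ne')
  have hx_sq : (2 / √3 * √(t ^ 2 - 1)) ^ 2 = 4 / 3 * (t ^ 2 - 1) := by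
    rw [mul_pow, div_pow, sq_sqrt (by norm_num), sq_sqrt (by nlinarith)]
    norm_num
  have hx : 0 ≤ 2 / √3 * √(t ^ 2 - 1) := by positivity
  constructor
  · rw [lt_arsinh_iff,
      ← pow_lt_pow_iff_left₀ (sinh_nonneg_iff.mpr (by positivity)) hx two_ne_zero, hx_sq,
      sinh_half_sq]
    exact sub_one_div_two_lt_of_two_mul_sq ht (two_mul_quadRoot_sq _)
  · rw [arsinh_lt_iff, ← pow_lt_pow_iff_left₀ hx (sinh_pos_iff.mpr hw).le two_ne_zero, hx_sq,
      sinh_sq]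
    exact lt_sq_sub_one_of_two_mul_sq ht (two_mul_quadRoot_sq _)
end

section
/- The limit as w → +∞ of arsinh((2/√3)·√(((cosh(w) + √(cosh²w + 8))/4)² − 1))/w equals 1. -/
/-!
Write the expression as `arsinh (g (cosh w))`. For `c ≥ 4` one has `c / 2 ≤ g c ≤ c`, while
`cosh w` lies between `e^w / 2` and `e^w`, and `arsinh x` between `log (2x)` and `log (3x)` for
`x ≥ 1`. Taking logarithms, the expression is `w + O(1)`, so its quotient by `w` tends to `1`.
-/

open Real Filter Topology Asymptotics

lemma tendsto_div_self_of_isBigO_sub_one {f : ℝ → ℝ}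
    (h : (fun x => f x - x) =O[atTop] fun _ => (1 : ℝ)) :
    Tendsto (fun x => f x / x) atTop (𝓝 1) :=
  (isEquivalent_iff_tendsto_one (v := id) (eventually_ne_atTop 0)).1
    (h.trans_isLittleO (isLittleO_const_id_atTop 1))

lemma abs_log_sub_log_le_log {x y C : ℝ} (hx : 0 < x) (hC : 0 < C)
    (hlo : x / C ≤ y) (hhi : y ≤ C * x) : |log y - log x| ≤ log C := by
  have hy : 0 < y := (div_pos hx hC).trans_le hlo
  rw [← log_div hy.ne' hx.ne', abs_le, ← log_inv]
  constructor
  · exact log_le_log (inv_pos.2 hC) (by rwa [le_div_iff₀ hx, ← div_eq_inv_mul])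
  · exact log_le_log (div_pos hy hx) (by rwa [div_le_iff₀ hx])

lemma abs_arsinh_sub_log_le {x : ℝ} (hx : 1 ≤ x) : |arsinh x - log x| ≤ log 3 := by
  have hsqrt : √(1 + x ^ 2) ≤ 1 + x := by
    rw [sqrt_le_left (by linarith)]
    nlinarith
  exact abs_log_sub_log_le_log (by linarith) (by norm_num)
    (by nlinarith [sqrt_nonneg (1 + x ^ 2)]) (by linarith)

lemma exp_div_two_le_cosh (x : ℝ) : exp x / 2 ≤ cosh x := by
  rw [cosh_eq]
  linarith [exp_pos (-x)]

lemma cosh_le_exp {x : ℝ} (hx : 0 ≤ x) : cosh x ≤ exp x := by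
  rw [cosh_eq]
  linarith [exp_le_exp.2 (show -x ≤ x by linarith)]

lemma abs_log_cosh_sub_le {x : ℝ} (hx : 0 ≤ x) : |log (cosh x) - x| ≤ log 2 := by
  simpa only [log_exp] using abs_log_sub_log_le_log (exp_pos x) two_pos
    (exp_div_two_le_cosh x) ((cosh_le_exp hx).trans (by linarith [exp_pos x]))

/-- The argument of `arsinh` in the theorem, written as a function of `c = cosh w`. -/
noncomputable def sinhRadius (c : ℝ) : ℝ :=
  2 / √3 * √(((c + √(c ^ 2 + 8)) / 4) ^ 2 - 1)

lemma sinhRadius_sq {c : ℝ} (hc : 1 ≤ c) :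
    sinhRadius c ^ 2 = 4 / 3 * (((c + √(c ^ 2 + 8)) / 4) ^ 2 - 1) := by
  have ht : 1 ≤ (c + √(c ^ 2 + 8)) / 4 := by
    linarith [le_sqrt_of_sq_le (show 3 ^ 2 ≤ c ^ 2 + 8 by nlinarith)]
  rw [sinhRadius, mul_pow, div_pow, sq_sqrt (sub_nonneg.2 (one_le_pow₀ ht)), sq_sqrt (by norm_num)]
  ring

lemma sinhRadius_mem_Icc {c : ℝ} (hc : 4 ≤ c) : sinhRadius c ∈ Set.Icc (c / 2) c := by
  have hs_lo : c ≤ √(c ^ 2 + 8) := le_sqrt_of_sq_le (by linarith)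
  have hs_hi : √(c ^ 2 + 8) ≤ c + 3 := (sqrt_le_left (by linarith)).2 (by nlinarith)
  have hsq := sinhRadius_sq (by linarith : 1 ≤ c)
  have hnonneg : 0 ≤ sinhRadius c := by unfold sinhRadius; positivity
  constructor <;> nlinarith

lemma abs_arsinh_sinhRadius_cosh_sub_le {w : ℝ} (hw : 0 ≤ w) (hc : 4 ≤ cosh w) :
    |arsinh (sinhRadius (cosh w)) - w| ≤ log 3 + log 2 + log 2 := by
  obtain ⟨hlo, hhi⟩ := sinhRadius_mem_Icc hc
  set r := sinhRadius (cosh w)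
  have harsinh : |arsinh r - log r| ≤ log 3 := abs_arsinh_sub_log_le (by linarith)
  have hradius : |log r - log (cosh w)| ≤ log 2 :=
    abs_log_sub_log_le_log (cosh_pos w) two_pos hlo (by linarith)
  have hcosh : |log (cosh w) - w| ≤ log 2 := abs_log_cosh_sub_le hw
  linarith [abs_sub_le (arsinh r) (log r) w, abs_sub_le (log r) (log (cosh w)) w]

theorem stmt_11 :
    Filter.Tendsto
      (fun w : ℝ => Real.arsinh (2 / Real.sqrt 3 *
          Real.sqrt (((Real.cosh w + Real.sqrt (Real.cosh w ^ 2 + 8)) / 4) ^ 2 - 1)) / w)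
      Filter.atTop (nhds 1) := by
  refine tendsto_div_self_of_isBigO_sub_one (.of_bound (log 3 + log 2 + log 2) ?_)
  filter_upwards [eventually_ge_atTop 0, tendsto_exp_atTop.eventually_ge_atTop 8]
    with w hw hexp
  rw [norm_one, mul_one, norm_eq_abs]
  exact abs_arsinh_sinhRadius_cosh_sub_le hw (by linarith [exp_div_two_le_cosh w])
end
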